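/- For $1<p<\infty$, $0<|t|\leq 1$ and all $s\in\mathbb{R}$, $[\varphi_p'(ts)]^p \leq \frac{(1-2\log|t|)^2}{|t|}\,[\varphi_p'(s)]^p$, where $\varphi_p'(s) = ((1+s^2)(\log(e+s^2))^4)^{-1/(2p)}$. -/

import Mathlib

open Real

/-!
With `c = |t|`, raising to the power `p` turns `φ_p'(x)` into `w(x)⁻¹`, where
`w(x) = √(1 + x²) · log(e + x²)²`, so the claim is `w(s) ≤ (1 - 2 log c)² / c · w(ts)`.
Writing `s² = a (ts)²` with `a = c⁻² ≥ 1`, both factors of `w` grow by a controlled amount: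
`√(1 + a y) ≤ √a √(1 + y)` and, since `log(e + y) ≥ 1` and `log a ≥ 0`,
`log(e + a y) ≤ log a + log(e + y) ≤ (1 + log a) log(e + y)`.
-/

/-- The reciprocal of `[φ_p'(x)]^p`. -/
noncomputable def weight (x : ℝ) : ℝ := √(1 + x ^ 2) * log (exp 1 + x ^ 2) ^ 2

lemma one_le_log_exp_one_add {x : ℝ} (hx : 0 ≤ x) : 1 ≤ log (exp 1 + x) := by
  rw [le_log_iff_exp_le (by positivity)]
  linarith

lemma log_exp_one_add_mul_le {a x : ℝ} (ha : 1 ≤ a) (hx : 0 ≤ x) :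
    log (exp 1 + a * x) ≤ (1 + log a) * log (exp 1 + x) := by
  have ha0 : 0 < a := by linarith
  have hlog_a : 0 ≤ log a := log_nonneg ha
  have hlog_x := one_le_log_exp_one_add hx
  calc log (exp 1 + a * x) ≤ log (a * (exp 1 + x)) :=
        log_le_log (by positivity) (by nlinarith [exp_pos 1])
    _ = log a + log (exp 1 + x) := log_mul ha0.ne' (by positivity)
    _ ≤ (1 + log a) * log (exp 1 + x) := by nlinarith

lemma sqrt_one_add_mul_le {a : ℝ} (ha : 1 ≤ a) (x : ℝ) :
    √(1 + a * x) ≤ √a * √(1 + x) := by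
  rw [← sqrt_mul (by linarith)]
  exact sqrt_le_sqrt (by nlinarith)

lemma weight_pos (x : ℝ) : 0 < weight x := by
  have := one_le_log_exp_one_add (sq_nonneg x)
  unfold weight
  positivity

lemma weight_le_of_abs_le_one {t : ℝ} (ht0 : 0 < |t|) (ht1 : |t| ≤ 1) (s : ℝ) :
    weight s ≤ (1 - 2 * log |t|) ^ 2 / |t| * weight (t * s) := by
  set a := (|t| ^ 2)⁻¹
  have ha : 1 ≤ a := one_le_inv₀ (by positivity) |>.mpr (pow_le_one₀ ht0.le ht1)
  have hs : s ^ 2 = a * (t * s) ^ 2 := by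
    rw [mul_pow, ← sq_abs t, ← mul_assoc, inv_mul_cancel₀ (by positivity), one_mul]
  have hlog_a : log a = -2 * log |t| := by
    rw [log_inv, log_pow]
    push_cast
    ring
  have hsqrt_a : √a = |t|⁻¹ := by
    rw [sqrt_inv, sqrt_sq ht0.le]
  have hsqrt := hsqrt_a ▸ sqrt_one_add_mul_le ha ((t * s) ^ 2)
  have hlog := hlog_a ▸ log_exp_one_add_mul_le ha (sq_nonneg (t * s))
  have hlog_nonneg : 0 ≤ log (exp 1 + a * (t * s) ^ 2) :=
    zero_le_one.trans (one_le_log_exp_one_add (by positivity))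
  calc weight s ≤ (|t|⁻¹ * √(1 + (t * s) ^ 2)) *
        ((1 + -2 * log |t|) * log (exp 1 + (t * s) ^ 2)) ^ 2 := by
        unfold weight
        rw [hs]
        gcongr
    _ = (1 - 2 * log |t|) ^ 2 / |t| * weight (t * s) := by
        unfold weight
        ring

lemma rpow_neg_one_div_two_mul_rpow {y : ℝ} (hy : 0 ≤ y) {p : ℝ} (hp : 0 < p) :
    (y ^ (-(1 / (2 * p)))) ^ p = (√y)⁻¹ := by
  rw [← rpow_mul hy, show -(1 / (2 * p)) * p = -(1 / 2) by field_simp, rpow_neg hy,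
    sqrt_eq_rpow]

lemma phi_rpow_eq_inv_weight {p : ℝ} (hp : 0 < p) (x : ℝ) :
    (((1 + x ^ 2) * log (exp 1 + x ^ 2) ^ 4) ^ (-(1 / (2 * p)))) ^ p = (weight x)⁻¹ := by
  rw [rpow_neg_one_div_two_mul_rpow (by positivity) hp, weight, sqrt_mul (by positivity),
    show log (exp 1 + x ^ 2) ^ 4 = (log (exp 1 + x ^ 2) ^ 2) ^ 2 by ring, sqrt_sq (by positivity)]

/-- For `1 < p < ∞`, `0 < |t| ≤ 1` and all `s ∈ ℝ`,
`[φ_p'(ts)]^p ≤ (1-2 log|t|)²/|t| · [φ_p'(s)]^p`, where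
`φ_p'(s) = ((1+s²)(log(e+s²))⁴)^(-1/(2p))`. -/
theorem stmt3 (p : ℝ) (hp : 1 < p) (t : ℝ) (ht0 : 0 < |t|) (ht1 : |t| ≤ 1)
    (φ' : ℝ → ℝ)
    (hφ' : ∀ s : ℝ, φ' s =
      ((1 + s ^ 2) * (Real.log (Real.exp 1 + s ^ 2)) ^ 4) ^ (-(1 / (2 * p)))) :
    ∀ s : ℝ, φ' (t * s) ^ p ≤ (1 - 2 * Real.log |t|) ^ 2 / |t| * φ' s ^ p := by
  intro s
  have hp0 : 0 < p := zero_lt_one.trans hp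
  rw [hφ', hφ', phi_rpow_eq_inv_weight hp0, phi_rpow_eq_inv_weight hp0, ← div_eq_mul_inv,
    le_div_iff₀ (weight_pos s), inv_mul_le_iff₀ (weight_pos (t * s)), mul_comm]
  exact weight_le_of_abs_le_one ht0 ht1 s
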